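/- Let G = (V,E) be a finite simple graph and A, B ⊆ V. If there exists at least one A-B-path in G and every A-B-path in G has odd length, then σ(G₋A)·σ(G₋B) > σ(G)·σ(G₋A₋B). -/

import Mathlib

open scoped Classical

/-- The number of independent vertex sets of `G` avoiding the set `W`
(i.e. `σ(G₋W)`, the number of independent sets of `G` with `W` deleted). -/
noncomputable def sigmaDel {V : Type*} [Fintype V] (G : SimpleGraph V) (W : Set V) : ℕ :=
  (Finset.univ.filter
    (fun s : Finset V => (∀ v ∈ s, v ∉ W) ∧ ∀ u ∈ s, ∀ v ∈ s, ¬ G.Adj u v)).card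

/-- The number of independent vertex sets of `G`. -/
noncomputable def sigmaG {V : Type*} [Fintype V] (G : SimpleGraph V) : ℕ :=
  sigmaDel G ∅

/-- `p` is an `A`-`B`-path: a path meeting `A` exactly in its first vertex
and `B` exactly in its last vertex. -/
def IsABPath {V : Type*} (G : SimpleGraph V) (A B : Set V) {a b : V} (p : G.Walk a b) : Prop :=
  p.IsPath ∧ a ∈ A ∧ b ∈ B ∧ (∀ x ∈ p.support, x ∈ A → x = a) ∧ (∀ x ∈ p.support, x ∈ B → x = b)

/-!
Let `U` be the set of vertices reachable from `A` inside `S ∆ T`. Swapping `S` and `T` on `U`,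
`(S, T) ↦ (S ∆ U, T ∆ U)`, is an involution (it fixes `S ∆ T`, hence `U`) that keeps both sets
independent, since `U` is a union of components of `G[S ∆ T]`. If `T` avoids `A ∪ B`, then
`S ∆ U` avoids `A`, and `U` avoids `B`: walks inside `S ∆ T` alternate between `S` and `T`, so a
walk there from `A` to `B` would contain an `A`-`B`-path of even length. Hence the swap injects
the pairs counted by `σ(G) σ(G₋A₋B)` into those counted by `σ(G₋A) σ(G₋B)`. It misses the pair
(odd positions, even positions) of a shortest `A`-`B`-path: a shortest path has no chords, so
both classes are independent, and swapping back would put its end in `B` into the second set.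
-/

open Finset
open scoped symmDiff

theorem Finset.card_lt_card_of_involutive {α : Type*} {f : α → α} {s t : Finset α}
    (hf : Function.Involutive f) (hst : Set.MapsTo f s t) {w : α} (hw : w ∈ t) (hfw : f w ∉ s) :
    #s < #t := by
  classical
  calc #s = #(s.image f) := (card_image_of_injective s hf.injective).symm
    _ < #t := by
      refine card_lt_card ⟨fun x hx => ?_, fun hts => ?_⟩
      · obtain ⟨y, hy, rfl⟩ := mem_image.1 hx
        exact hst hy
      · obtain ⟨y, hy, rfl⟩ := mem_image.1 (hts hw)
        rw [hf y] at hfw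
        exact hfw hy

namespace SimpleGraph

variable {V : Type*} {G : SimpleGraph V}

lemma spanningCoe_induce_adj {s : Set V} {u v : V} :
    (G.induce s).spanningCoe.Adj u v ↔ G.Adj u v ∧ u ∈ s ∧ v ∈ s := by
  simp only [map_adj, comap_adj, Function.Embedding.coe_subtype, Subtype.exists]
  grind

lemma reachable_spanningCoe_induce {s : Set V} {u v : V} (p : G.Walk u v)
    (hp : ∀ x ∈ p.support, x ∈ s) : (G.induce s).spanningCoe.Reachable u v := by
  induction p with
  | nil => rfl
  | @cons u w v huw q ih =>
    have hadj : (G.induce s).spanningCoe.Adj u w :=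
      spanningCoe_induce_adj.2 ⟨huw, hp u (by simp), hp w (by simp)⟩
    exact hadj.reachable.trans (ih fun x hx => hp x (by simp [hx]))

lemma isIndepSet_coe_iff {s : Finset V} :
    G.IsIndepSet (s : Set V) ↔ ∀ u ∈ s, ∀ v ∈ s, ¬ G.Adj u v :=
  ⟨fun h _ hu _ hv huv => h hu hv huv.ne huv, fun h _ hu _ hv _ => h _ hu _ hv⟩

theorem IsIndepSet.symmDiff_of_closed {S T U : Set V} (hS : G.IsIndepSet S)
    (hT : G.IsIndepSet T) (hU : U ⊆ S ∆ T) (hcl : ∀ u ∈ U, ∀ v ∈ S ∆ T, G.Adj u v → v ∈ U) :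
    G.IsIndepSet (S ∆ U) := by
  have hUT : ∀ x ∈ U, x ∉ S → x ∈ T := fun x hx hxS => by
    have := hU hx
    rw [Set.mem_symmDiff] at this
    tauto
  have cross : ∀ x y, x ∈ S → x ∉ U → y ∈ U → y ∉ S → ¬ G.Adj x y := by
    intro x y hxS hxU hyU hyS hxy
    by_cases hxT : x ∈ T
    · exact hT hxT (hUT y hyU hyS) hxy.ne hxy
    · exact hxU (hcl y hyU x (Or.inl ⟨hxS, hxT⟩) hxy.symm)
  intro x hx y hy hne hxy
  rcases hx with ⟨hxS, hxU⟩ | ⟨hxU, hxS⟩ <;> rcases hy with ⟨hyS, hyU⟩ | ⟨hyU, hyS⟩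
  · exact hS hxS hyS hne hxy
  · exact cross x y hxS hxU hyU hyS hxy
  · exact cross y x hyS hyU hxU hxS hxy.symm
  · exact hT (hUT x hxU hxS) (hUT y hyU hyS) hne hxy

noncomputable def bicoloringSymmDiff {S T : Set V} (hS : G.IsIndepSet S) (hT : G.IsIndepSet T) :
    (G.induce (S ∆ T)).spanningCoe.Coloring Bool :=
  Coloring.mk (fun v => decide (v ∈ T)) fun {u v} huv => by
    obtain ⟨huv, hu, hv⟩ := spanningCoe_induce_adj.1 huv
    rw [Set.mem_symmDiff] at hu hv
    simp only [ne_eq, decide_eq_decide]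
    by_cases huT : u ∈ T
    · exact fun h => hT huT (h.1 huT) huv.ne huv
    · exact fun h => hS (by tauto) (by tauto) huv.ne huv

@[simp]
lemma bicoloringSymmDiff_apply {S T : Set V} (hS : G.IsIndepSet S) (hT : G.IsIndepSet T)
    (v : V) :
    bicoloringSymmDiff hS hT v = decide (v ∈ T) :=
  rfl

theorem Walk.eq_add_one_of_adj_getVert {u v : V} {p : G.Walk u v}
    (hmin : ∀ q : G.Walk u v, p.length ≤ q.length) {i j : ℕ} (hij : i < j) (hj : j ≤ p.length)
    (hadj : G.Adj (p.getVert i) (p.getVert j)) : j = i + 1 := by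
  have := hmin ((p.take i).append (.cons hadj (p.drop j)))
  simp only [Walk.length_append, Walk.length_cons, Walk.take_length, Walk.drop_length] at this
  omega

namespace Walk

noncomputable def vertsAt {u v : V} (p : G.Walk u v) (P : ℕ → Prop) : Finset V :=
  ((range (p.length + 1)).filter P).image p.getVert

variable {u v : V} {p : G.Walk u v} {P : ℕ → Prop}

lemma mem_vertsAt {x : V} : x ∈ p.vertsAt P ↔ ∃ i ≤ p.length, P i ∧ p.getVert i = x := by
  simp [vertsAt, and_assoc]

lemma IsPath.getVert_mem_vertsAt_iff (hp : p.IsPath) {i : ℕ} (hi : i ≤ p.length) :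
    p.getVert i ∈ p.vertsAt P ↔ P i := by
  refine ⟨fun h => ?_, fun h => mem_vertsAt.2 ⟨i, hi, h, rfl⟩⟩
  obtain ⟨j, hj, hPj, hji⟩ := mem_vertsAt.1 h
  rwa [← hp.getVert_injOn hj hi hji]

lemma isIndepSet_vertsAt (hmin : ∀ q : G.Walk u v, p.length ≤ q.length)
    (hP : ∀ i, P i → ¬ P (i + 1)) : G.IsIndepSet (p.vertsAt P : Set V) := by
  have key : ∀ i j, i < j → j ≤ p.length → P i → P j → ¬ G.Adj (p.getVert i) (p.getVert j) :=
    fun i j hij hj hi hPj hadj => hP i hi (eq_add_one_of_adj_getVert hmin hij hj hadj ▸ hPj)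
  rintro _ hx _ hy - hadj
  obtain ⟨i, hi, hPi, rfl⟩ := mem_vertsAt.1 hx
  obtain ⟨j, hj, hPj, rfl⟩ := mem_vertsAt.1 hy
  rcases lt_trichotomy i j with hij | rfl | hij
  · exact key i j hij hj hPi hPj hadj
  · exact hadj.ne rfl
  · exact key j i hij hi hPj hPi hadj.symm

lemma IsPath.mem_vertsAt_odd_symmDiff_even (hp : p.IsPath) {x : V}
    (hx : x ∈ p.support) : x ∈ p.vertsAt Odd ∆ p.vertsAt Even := by
  obtain ⟨i, rfl, hi⟩ := mem_support_iff_exists_getVert.1 hx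
  rw [mem_symmDiff, hp.getVert_mem_vertsAt_iff hi, hp.getVert_mem_vertsAt_iff hi]
  rcases Nat.even_or_odd i with h | h
  · exact Or.inr ⟨h, Nat.not_odd_iff_even.2 h⟩
  · exact Or.inl ⟨h, Nat.not_even_iff_odd.2 h⟩

end Walk

section reachFrom

variable {A : Set V}

noncomputable def reachFrom (G : SimpleGraph V) (A : Set V) (W : Finset V) : Finset V :=
  W.filter fun v => ∃ a ∈ A, (G.induce (W : Set V)).spanningCoe.Reachable a v

variable {W : Finset V} {u v : V}

lemma mem_reachFrom :
    v ∈ reachFrom G A W ↔ v ∈ W ∧ ∃ a ∈ A, (G.induce (W : Set V)).spanningCoe.Reachable a v :=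
  mem_filter

lemma mem_reachFrom_of_adj (hu : u ∈ reachFrom G A W) (hv : v ∈ W) (huv : G.Adj u v) :
    v ∈ reachFrom G A W := by
  obtain ⟨huW, a, ha, hau⟩ := mem_reachFrom.1 hu
  exact mem_reachFrom.2 ⟨hv, a, ha, hau.trans (spanningCoe_induce_adj.2 ⟨huv, huW, hv⟩).reachable⟩

lemma reachFrom_subset : reachFrom G A W ⊆ W :=
  filter_subset _ _

noncomputable def swapAlong (G : SimpleGraph V) (A : Set V) (z : Finset V × Finset V) :
    Finset V × Finset V :=
  (z.1 ∆ reachFrom G A (z.1 ∆ z.2), z.2 ∆ reachFrom G A (z.1 ∆ z.2))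

lemma swapAlong_involutive : Function.Involutive (swapAlong G A) := by
  rintro ⟨S, T⟩
  have hW : (S ∆ reachFrom G A (S ∆ T)) ∆ (T ∆ reachFrom G A (S ∆ T)) = S ∆ T := by
    rw [symmDiff_symmDiff_symmDiff_comm, symmDiff_self, symmDiff_bot]
  simp only [swapAlong, hW, symmDiff_symmDiff_cancel_right]

end reachFrom

noncomputable def indepSetsOff [Fintype V] (G : SimpleGraph V) (W : Set V) : Finset (Finset V) :=
  univ.filter fun s : Finset V => (∀ v ∈ s, v ∉ W) ∧ ∀ u ∈ s, ∀ v ∈ s, ¬ G.Adj u v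

variable [Fintype V] {W : Set V} {s : Finset V}

lemma card_indepSetsOff : #(G.indepSetsOff W) = sigmaDel G W := rfl

lemma mem_indepSetsOff :
    s ∈ G.indepSetsOff W ↔ (∀ v ∈ s, v ∉ W) ∧ G.IsIndepSet (s : Set V) := by
  simp [indepSetsOff, isIndepSet_coe_iff]

end SimpleGraph

open SimpleGraph

section ABPaths

variable {V : Type*} {G H : SimpleGraph V} {A B : Set V}

lemma IsABPath.mapLe (hGH : G ≤ H) {a b : V} {p : G.Walk a b} (hp : IsABPath G A B p) :
    IsABPath H A B (p.mapLe hGH) := by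
  obtain ⟨hpath, ha, hb, hA, hB⟩ := hp
  exact ⟨(Walk.isPath_mapLe hGH).2 hpath, ha, hb,
    by simpa [Walk.support_mapLe_eq_support] using hA,
    by simpa [Walk.support_mapLe_eq_support] using hB⟩

theorem exists_isABPath_length_le {a b : V} (p : G.Walk a b) (ha : a ∈ A) (hb : b ∈ B) :
    ∃ a' b', ∃ q : G.Walk a' b', IsABPath G A B q ∧ q.length ≤ p.length := by
  induction hn : p.length using Nat.strong_induction_on generalizing a b with
  | _ n ih =>
  by_cases hA : ∃ x ∈ p.support, x ∈ A ∧ x ≠ a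
  · obtain ⟨x, hx, hxA, hxa⟩ := hA
    obtain ⟨a', b', q, hq, hle⟩ :=
      ih _ (hn ▸ p.length_dropUntil_lt_length hx hxa) (p.dropUntil x hx) hxA hb rfl
    exact ⟨a', b', q, hq, hle.trans (hn ▸ p.length_dropUntil_le_length hx)⟩
  by_cases hB : ∃ x ∈ p.support, x ∈ B ∧ x ≠ b
  · obtain ⟨x, hx, hxB, hxb⟩ := hB
    obtain ⟨a', b', q, hq, hle⟩ :=
      ih _ (hn ▸ p.length_takeUntil_lt_length hx hxb) (p.takeUntil x hx) ha hxB rfl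
    exact ⟨a', b', q, hq, hle.trans (hn ▸ p.length_takeUntil_le_length hx)⟩
  push Not at hA hB
  refine ⟨a, b, p.bypass, ⟨p.bypass_isPath, ha, hb, ?_, ?_⟩, hn ▸ p.length_bypass_le_length⟩
  · exact fun x hx => hA x (p.support_bypass_subset_support hx)
  · exact fun x hx => hB x (p.support_bypass_subset_support hx)

theorem exists_isABPath_forall_length_le {a b : V} (p : G.Walk a b) (ha : a ∈ A) (hb : b ∈ B) :
    ∃ a' b', ∃ q : G.Walk a' b', IsABPath G A B q ∧
      ∀ a ∈ A, ∀ b ∈ B, ∀ r : G.Walk a b, q.length ≤ r.length := by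
  have hex : ∃ n, ∃ a ∈ A, ∃ b ∈ B, ∃ r : G.Walk a b, r.length = n := ⟨_, a, ha, b, hb, p, rfl⟩
  obtain ⟨a₀, ha₀, b₀, hb₀, r₀, hr₀⟩ := Nat.find_spec hex
  obtain ⟨a', b', q, hq, hle⟩ := exists_isABPath_length_le r₀ ha₀ hb₀
  exact ⟨a', b', q, hq, fun a ha b hb r =>
    hle.trans (hr₀ ▸ Nat.find_min' hex ⟨a, ha, b, hb, r, rfl⟩)⟩

theorem notMem_reachFrom_of_odd
    (hodd : ∀ a b, ∀ p : G.Walk a b, IsABPath G A B p → Odd p.length) {S T : Finset V}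
    (hS : G.IsIndepSet (S : Set V)) (hT : G.IsIndepSet (T : Set V)) (hTAB : ∀ v ∈ T, v ∉ A ∪ B)
    {x : V} (hx : x ∈ B) : x ∉ reachFrom G A (S ∆ T) := by
  intro hxU
  obtain ⟨-, a, ha, hax⟩ := mem_reachFrom.1 hxU
  rw [coe_symmDiff] at hax
  obtain ⟨a', b', q, hq, -⟩ := exists_isABPath_length_le hax.some ha hx
  have hq_odd := hodd _ _ _ (hq.mapLe (G.spanningCoe_induce_le _))
  rw [Walk.length_mapLe, (bicoloringSymmDiff hS hT).odd_length_iff_not_congr q] at hq_odd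
  have ha' : a' ∉ T := fun h => hTAB a' h (Or.inl hq.2.1)
  have hb' : b' ∉ T := fun h => hTAB b' h (Or.inr hq.2.2.1)
  simp [ha', hb'] at hq_odd

theorem swapAlong_mem_product [Fintype V]
    (hodd : ∀ a b, ∀ p : G.Walk a b, IsABPath G A B p → Odd p.length) {z : Finset V × Finset V}
    (hz : z ∈ G.indepSetsOff ∅ ×ˢ G.indepSetsOff (A ∪ B)) :
    swapAlong G A z ∈ G.indepSetsOff A ×ˢ G.indepSetsOff B := by
  obtain ⟨S, T⟩ := z
  simp only [swapAlong, mem_product, mem_indepSetsOff] at hz ⊢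
  obtain ⟨⟨-, hS⟩, hTAB, hT⟩ := hz
  set U := reachFrom G A (S ∆ T)
  have hU : (U : Set V) ⊆ ↑S ∆ ↑T := by
    rw [← coe_symmDiff, coe_subset]; exact reachFrom_subset
  have hcl : ∀ u ∈ (U : Set V), ∀ v ∈ (↑S ∆ ↑T : Set V), G.Adj u v → v ∈ (U : Set V) := by
    rw [← coe_symmDiff]; exact fun u hu v hv huv => mem_reachFrom_of_adj hu hv huv
  refine ⟨⟨fun v hv hvA => ?_, ?_⟩, ⟨fun v hv hvB => ?_, ?_⟩⟩
  · rcases mem_symmDiff.1 hv with ⟨hvS, hvU⟩ | ⟨hvU, hvS⟩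
    · have hvT : v ∉ T := fun h => hTAB v h (Or.inl hvA)
      exact hvU (mem_reachFrom.2 ⟨mem_symmDiff.2 (Or.inl ⟨hvS, hvT⟩), v, hvA, .refl _⟩)
    · have := hU hvU
      simp only [Set.mem_symmDiff, mem_coe, hvS, false_and, false_or] at this
      exact hTAB v this.1 (Or.inl hvA)
  · rw [coe_symmDiff]; exact hS.symmDiff_of_closed hT hU hcl
  · rcases mem_symmDiff.1 hv with ⟨hvT, -⟩ | ⟨hvU, -⟩
    · exact hTAB v hvT (Or.inr hvB)
    · exact notMem_reachFrom_of_odd hodd hS hT hTAB hvB hvU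
  · rw [coe_symmDiff]
    exact hT.symmDiff_of_closed hS (symmDiff_comm (α := Set V) _ _ ▸ hU)
      (symmDiff_comm (α := Set V) _ _ ▸ hcl)

section shortestPath

variable [Fintype V] {a b : V} {p : G.Walk a b}

lemma IsABPath.vertsAt_mem_product (hp : IsABPath G A B p)
    (hmin : ∀ q : G.Walk a b, p.length ≤ q.length) (hodd : Odd p.length) :
    (p.vertsAt Odd, p.vertsAt Even) ∈ G.indepSetsOff A ×ˢ G.indepSetsOff B := by
  obtain ⟨hpath, -, -, hA, hB⟩ := hp
  simp only [mem_product, mem_indepSetsOff]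
  refine ⟨⟨fun x hx hxA => ?_, Walk.isIndepSet_vertsAt hmin fun i hi => ?_⟩,
    ⟨fun x hx hxB => ?_, Walk.isIndepSet_vertsAt hmin fun i hi => ?_⟩⟩
  · obtain ⟨i, hi, hi_odd, rfl⟩ := Walk.mem_vertsAt.1 hx
    have := (hpath.getVert_eq_start_iff hi).1 (hA _ (p.getVert_mem_support i) hxA)
    exact Nat.not_odd_zero (this ▸ hi_odd)
  · exact fun h => Nat.odd_add_one.1 h hi
  · obtain ⟨i, hi, hi_even, rfl⟩ := Walk.mem_vertsAt.1 hx
    have := (hpath.getVert_eq_end_iff hi).1 (hB _ (p.getVert_mem_support i) hxB)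
    exact Nat.not_even_iff_odd.2 hodd (this ▸ hi_even)
  · exact fun h => Nat.even_add_one.1 h hi

lemma IsABPath.swapAlong_vertsAt_notMem (hp : IsABPath G A B p) (hodd : Odd p.length) :
    swapAlong G A (p.vertsAt Odd, p.vertsAt Even) ∉
      G.indepSetsOff ∅ ×ˢ G.indepSetsOff (A ∪ B) := by
  have hb_reach : b ∈ reachFrom G A (p.vertsAt Odd ∆ p.vertsAt Even) :=
    mem_reachFrom.2 ⟨hp.1.mem_vertsAt_odd_symmDiff_even p.end_mem_support, a, hp.2.1,
      reachable_spanningCoe_induce p fun x hx => hp.1.mem_vertsAt_odd_symmDiff_even hx⟩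
  have hb_even : b ∉ p.vertsAt Even := by
    have := hp.1.getVert_mem_vertsAt_iff (P := Even) le_rfl
    rw [Walk.getVert_length] at this
    exact fun h => Nat.not_even_iff_odd.2 hodd (this.1 h)
  simp only [mem_product, mem_indepSetsOff, not_and_or]
  refine Or.inr (Or.inl fun h => h b ?_ (Or.inr hp.2.2.1))
  exact mem_symmDiff.2 (Or.inr ⟨hb_reach, hb_even⟩)

end shortestPath

end ABPaths

theorem sigma_ineq_of_odd_ABpaths {V : Type*} [Fintype V] (G : SimpleGraph V) (A B : Set V)
    (hex : ∃ a b, ∃ p : G.Walk a b, IsABPath G A B p)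
    (hodd : ∀ a b, ∀ p : G.Walk a b, IsABPath G A B p → Odd p.length) :
    sigmaG G * sigmaDel G (A ∪ B) < sigmaDel G A * sigmaDel G B := by
  obtain ⟨a₀, b₀, p₀, hp₀⟩ := hex
  obtain ⟨a, b, p, hp, hmin⟩ := exists_isABPath_forall_length_le p₀ hp₀.2.1 hp₀.2.2.1
  have hgeo : ∀ q : G.Walk a b, p.length ≤ q.length := hmin a hp.2.1 b hp.2.2.1
  simp only [sigmaG, ← card_indepSetsOff, ← card_product]
  exact card_lt_card_of_involutive swapAlong_involutive
    (fun z hz => swapAlong_mem_product hodd hz) (hp.vertsAt_mem_product hgeo (hodd _ _ p hp))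
    (hp.swapAlong_vertsAt_notMem (hodd _ _ p hp))
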